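/- arXiv:2410.04026 — 3 statements merged into one kernel-verified Lean document; each statement's English description precedes it below -/
import Mathlib

section
/- Let A⁽¹⁾ ∈ ℂ^{n1×n1}, A⁽²⁾ ∈ ℂ^{n2×n2}, A⁽³⁾ ∈ ℂ^{n3×n3} admit Schur decompositions A⁽ᵐ⁾ = U⁽ᵐ⁾ T⁽ᵐ⁾ U⁽ᵐ⁾* with U⁽ᵐ⁾ unitary and T⁽ᵐ⁾ upper triangular; write Λ⁽ᵐ⁾ = diag(T⁽ᵐ⁾) = diag(λ⁽ᵐ⁾_1,…,λ⁽ᵐ⁾_{n_m}) and T̃⁽ᵐ⁾ = T⁽ᵐ⁾ − Λ⁽ᵐ⁾, and assume λ⁽¹⁾_i + λ⁽²⁾_j + λ⁽³⁾_k ≠ 0 for all i, j, k. Given Y ∈ ℂ^{n1×n2×n3} with y = vec(Y), define C_{i,j,k} = 1/(λ⁽¹⁾_i + λ⁽²⁾_j + λ⁽³⁾_k) and tensors K_0 = C ⊙ (Y ×₁ U⁽¹⁾* ×₂ U⁽²⁾* ×₃ U⁽³⁾*), K_{j+1} = C ⊙ (K_j ×₁ T̃⁽¹⁾ + K_j ×₂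 T̃⁽²⁾ + K_j ×₃ T̃⁽³⁾). Then the tensor X = (Σ_{j=0}^{n1 n2 n3 − 1} (−1)^j K_j) ×₁ U⁽¹⁾ ×₂ U⁽²⁾ ×₃ U⁽³⁾ satisfies (A⁽³⁾ ⊕ A⁽²⁾ ⊕ A⁽¹⁾) vec(X) = y. -/
open Matrix
open scoped Kronecker

noncomputable section

/-- Column-stacking vectorization of a matrix: the pair `(j, i)` encodes the flat
index `i + j*m` (0-based), i.e. `vecM A (j, i) = A i j`. -/
def vecM {R : Type*} {m n : ℕ} (A : Matrix (Fin m) (Fin n) R) : Fin n × Fin m → R :=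
  fun p => A p.2 p.1

/-- Vectorization of a third-order tensor: the triple `(k, j, i)` encodes the flat
index `i + j*n1 + k*n1*n2` (0-based), i.e. `vecT T (k, j, i) = T i j k`. -/
def vecT {R : Type*} {n1 n2 n3 : ℕ} (T : Fin n1 → Fin n2 → Fin n3 → R) :
    Fin n3 × Fin n2 × Fin n1 → R :=
  fun p => T p.2.2 p.2.1 p.1

/-- Mode-1 product of a third-order tensor with a matrix. -/
def mode1 {R : Type*} [CommRing R] {d1 d2 d3 k : ℕ}
    (T : Fin d1 → Fin d2 → Fin d3 → R) (V : Matrix (Fin k) (Fin d1) R) :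
    Fin k → Fin d2 → Fin d3 → R :=
  fun i j2 j3 => ∑ j1, T j1 j2 j3 * V i j1

/-- Mode-2 product of a third-order tensor with a matrix. -/
def mode2 {R : Type*} [CommRing R] {d1 d2 d3 k : ℕ}
    (T : Fin d1 → Fin d2 → Fin d3 → R) (V : Matrix (Fin k) (Fin d2) R) :
    Fin d1 → Fin k → Fin d3 → R :=
  fun j1 i j3 => ∑ j2, T j1 j2 j3 * V i j2

/-- Mode-3 product of a third-order tensor with a matrix. -/
def mode3 {R : Type*} [CommRing R] {d1 d2 d3 k : ℕ}
    (T : Fin d1 → Fin d2 → Fin d3 → R) (V : Matrix (Fin k) (Fin d3) R) :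
    Fin d1 → Fin d2 → Fin k → R :=
  fun j1 j2 i => ∑ j3, T j1 j2 j3 * V i j3

/-- Kronecker sum of two square matrices: `A ⊕ B = A ⊗ I + I ⊗ B`. -/
def ksum2 {R : Type*} [CommRing R] {n1 n2 : ℕ}
    (A : Matrix (Fin n2) (Fin n2) R) (B : Matrix (Fin n1) (Fin n1) R) :
    Matrix (Fin n2 × Fin n1) (Fin n2 × Fin n1) R :=
  A ⊗ₖ (1 : Matrix (Fin n1) (Fin n1) R) + (1 : Matrix (Fin n2) (Fin n2) R) ⊗ₖ B

/-- Kronecker sum of three square matrices: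
`A ⊕ B ⊕ C = A ⊗ I_{n2} ⊗ I_{n1} + I_{n3} ⊗ B ⊗ I_{n1} + I_{n3} ⊗ I_{n2} ⊗ C`. -/
def ksum3 {R : Type*} [CommRing R] {n1 n2 n3 : ℕ}
    (A : Matrix (Fin n3) (Fin n3) R) (B : Matrix (Fin n2) (Fin n2) R)
    (C : Matrix (Fin n1) (Fin n1) R) :
    Matrix (Fin n3 × Fin n2 × Fin n1) (Fin n3 × Fin n2 × Fin n1) R :=
  A ⊗ₖ (1 : Matrix (Fin n2 × Fin n1) (Fin n2 × Fin n1) R)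
    + (1 : Matrix (Fin n3) (Fin n3) R) ⊗ₖ (B ⊗ₖ (1 : Matrix (Fin n1) (Fin n1) R))
    + (1 : Matrix (Fin n3) (Fin n3) R) ⊗ₖ ((1 : Matrix (Fin n2) (Fin n2) R) ⊗ₖ C)

/-- Entrywise (Hadamard) product of third-order tensors. -/
def hadT {R : Type*} [Mul R] {n1 n2 n3 : ℕ} (S T : Fin n1 → Fin n2 → Fin n3 → R) :
    Fin n1 → Fin n2 → Fin n3 → R :=
  fun i j k => S i j k * T i j k


section Helpers

lemma myPow_entry_zero {α : Type*} [Fintype α] [DecidableEq α]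
    (f : α → ℕ) (P : Matrix α α ℂ) (hP : ∀ p q, ¬ f p < f q → P p q = 0) :
    ∀ t p q, f q < f p + t → (P ^ t) p q = 0 := by
  intro t
  induction t with
  | zero =>
    intro p q h
    rw [pow_zero]
    exact Matrix.one_apply_ne (by rintro rfl; omega)
  | succ t ih =>
    intro p q h
    rw [pow_succ, Matrix.mul_apply]
    refine Finset.sum_eq_zero fun r _ => ?_
    by_cases hr : f r < f p + t
    · rw [ih p r hr, zero_mul]
    · rw [hP r q (by omega), mul_zero]

lemma myNilpotent_of_strict {α : Type*} [Fintype α] [DecidableEq α]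
    (f : α → ℕ) (hf : ∀ q, f q < Fintype.card α)
    (P : Matrix α α ℂ) (hP : ∀ p q, ¬ f p < f q → P p q = 0) :
    P ^ (Fintype.card α) = 0 := by
  ext p q
  rw [myPow_entry_zero f P hP (Fintype.card α) p q (by have := hf q; omega)]
  rfl

lemma myKronecker_conjTranspose {m n p q : Type*} (A : Matrix m n ℂ)
    (B : Matrix p q ℂ) : (A ⊗ₖ B)ᴴ = Aᴴ ⊗ₖ Bᴴ := by
  ext ⟨i, r⟩ ⟨j, s⟩
  simp [Matrix.conjTranspose_apply, kroneckerMap_apply, star_mul', mul_comm]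

lemma mySemiconj {α : Type*} [Fintype α] [DecidableEq α] (N Dc : Matrix α α ℂ) (m : ℕ) :
    Dc * (N * Dc) ^ m = (Dc * N) ^ m * Dc := by
  have h : SemiconjBy Dc (N * Dc) (Dc * N) := (Matrix.mul_assoc Dc N Dc).symm
  exact (h.pow_right m).eq

lemma myKey {α : Type*} [Fintype α] [DecidableEq α] (D N Dc : Matrix α α ℂ)
    (h1 : D * Dc = 1) (m : ℕ) :
    (D + N) * ((Dc * N) ^ m * Dc) = (N * Dc) ^ m + (N * Dc) ^ (m + 1) := by
  rw [← mySemiconj, Matrix.add_mul, ← Matrix.mul_assoc, ← Matrix.mul_assoc, h1,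
    Matrix.one_mul, pow_succ']

lemma myTelescope {α : Type*} [Fintype α] [DecidableEq α] (D N Dc : Matrix α α ℂ)
    (h1 : D * Dc = 1) (m : ℕ) :
    (D + N) * (∑ j ∈ Finset.range m, ((-1 : ℂ) ^ j) • ((Dc * N) ^ j * Dc))
      = 1 - ((-1 : ℂ) ^ m) • (N * Dc) ^ m := by
  induction m with
  | zero => simp
  | succ m ih =>
    rw [Finset.sum_range_succ, Matrix.mul_add, ih, Matrix.mul_smul, myKey D N Dc h1,
      smul_add]
    have hs : ((-1 : ℂ)) ^ (m + 1) = -((-1 : ℂ) ^ m) := by ring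
    rw [hs, neg_smul, pow_succ]
    abel

lemma myVecT_modes_sum {n1 n2 n3 : ℕ} (T : Fin n1 → Fin n2 → Fin n3 → ℂ)
    (V1 : Matrix (Fin n1) (Fin n1) ℂ) (V2 : Matrix (Fin n2) (Fin n2) ℂ)
    (V3 : Matrix (Fin n3) (Fin n3) ℂ) :
    vecT (mode1 T V1 + mode2 T V2 + mode3 T V3) = (ksum3 V3 V2 V1).mulVec (vecT T) := by
  funext p
  obtain ⟨k, j, i⟩ := p
  simp [vecT, mode1, mode2, mode3, ksum3, Matrix.mulVec, dotProduct,
    kroneckerMap_apply, Matrix.one_apply, Fintype.sum_prod_type, add_mul, mul_add,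
    Finset.sum_add_distrib, ite_and, mul_ite, ite_mul, mul_zero, zero_mul,
    Finset.sum_ite_eq, Finset.sum_ite_eq', mul_comm]
  ring

lemma myVecT_mode123 {n1 n2 n3 : ℕ} (T : Fin n1 → Fin n2 → Fin n3 → ℂ)
    (V1 : Matrix (Fin n1) (Fin n1) ℂ) (V2 : Matrix (Fin n2) (Fin n2) ℂ)
    (V3 : Matrix (Fin n3) (Fin n3) ℂ) :
    vecT (mode3 (mode2 (mode1 T V1) V2) V3) = (V3 ⊗ₖ (V2 ⊗ₖ V1)).mulVec (vecT T) := by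
  funext p
  obtain ⟨k, j, i⟩ := p
  simp only [vecT, mode1, mode2, mode3, Matrix.mulVec, dotProduct,
    kroneckerMap_apply, Fintype.sum_prod_type, Finset.sum_mul]
  refine Finset.sum_congr rfl fun x _ => Finset.sum_congr rfl fun x1 _ =>
    Finset.sum_congr rfl fun x2 _ => by ring

lemma myVecT_hadT {n1 n2 n3 : ℕ} (C T : Fin n1 → Fin n2 → Fin n3 → ℂ) :
    vecT (hadT C T)
      = (diagonal (fun p : Fin n3 × Fin n2 × Fin n1 => C p.2.2 p.2.1 p.1)).mulVec (vecT T) := by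
  funext p
  rw [Matrix.mulVec_diagonal]
  rfl

lemma myVecT_sum {n1 n2 n3 : ℕ} (s : Finset ℕ) (F : ℕ → Fin n1 → Fin n2 → Fin n3 → ℂ) :
    vecT (∑ j ∈ s, F j) = ∑ j ∈ s, vecT (F j) := by
  funext p
  simp [vecT, Finset.sum_apply]

lemma myVecT_smul {n1 n2 n3 : ℕ} (a : ℂ) (F : Fin n1 → Fin n2 → Fin n3 → ℂ) :
    vecT (a • F) = a • vecT F := by
  funext p
  simp [vecT]

lemma mySum_mulVec {α : Type*} [Fintype α] [DecidableEq α] (s : Finset ℕ)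
    (M : ℕ → Matrix α α ℂ) (v : α → ℂ) :
    (∑ j ∈ s, M j).mulVec v = ∑ j ∈ s, (M j).mulVec v := by
  funext x
  simp only [Matrix.mulVec, dotProduct, Finset.sum_apply, Matrix.sum_apply,
    Finset.sum_mul]
  rw [Finset.sum_comm]

lemma myKsum3_split {n1 n2 n3 : ℕ} (T1 : Matrix (Fin n1) (Fin n1) ℂ)
    (T2 : Matrix (Fin n2) (Fin n2) ℂ) (T3 : Matrix (Fin n3) (Fin n3) ℂ) :
    ksum3 T3 T2 T1 =
      diagonal (fun p : Fin n3 × Fin n2 × Fin n1 => T1 p.2.2 p.2.2 + T2 p.2.1 p.2.1 + T3 p.1 p.1)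
      + ksum3 (T3 - diagonal fun i => T3 i i) (T2 - diagonal fun i => T2 i i)
          (T1 - diagonal fun i => T1 i i) := by
  ext ⟨k, j, i⟩ ⟨k', j', i'⟩
  simp only [ksum3, Matrix.add_apply, kroneckerMap_apply, Matrix.sub_apply,
    Matrix.one_apply, Matrix.diagonal_apply, Prod.mk.injEq]
  split_ifs <;> simp_all <;> ring

end Helpers

/-- Theorem 4.5: solution of `(A⁽³⁾ ⊕ A⁽²⁾ ⊕ A⁽¹⁾) x = y` for
arbitrary matrices via Schur decompositions and the recursively defined
tensors `K_j`. -/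
theorem ksum3_general_solution {n1 n2 n3 : ℕ}
    (A1 U1 T1 : Matrix (Fin n1) (Fin n1) ℂ)
    (A2 U2 T2 : Matrix (Fin n2) (Fin n2) ℂ)
    (A3 U3 T3 : Matrix (Fin n3) (Fin n3) ℂ)
    (hU1 : U1 * U1ᴴ = 1 ∧ U1ᴴ * U1 = 1)
    (hU2 : U2 * U2ᴴ = 1 ∧ U2ᴴ * U2 = 1)
    (hU3 : U3 * U3ᴴ = 1 ∧ U3ᴴ * U3 = 1)
    (hT1 : ∀ i j : Fin n1, j < i → T1 i j = 0)
    (hT2 : ∀ i j : Fin n2, j < i → T2 i j = 0)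
    (hT3 : ∀ i j : Fin n3, j < i → T3 i j = 0)
    (hA1 : A1 = U1 * T1 * U1ᴴ)
    (hA2 : A2 = U2 * T2 * U2ᴴ)
    (hA3 : A3 = U3 * T3 * U3ᴴ)
    (hne : ∀ (i : Fin n1) (j : Fin n2) (k : Fin n3), T1 i i + T2 j j + T3 k k ≠ 0)
    (S1 : Matrix (Fin n1) (Fin n1) ℂ) (hS1 : S1 = T1 - diagonal (fun i => T1 i i))
    (S2 : Matrix (Fin n2) (Fin n2) ℂ) (hS2 : S2 = T2 - diagonal (fun i => T2 i i))
    (S3 : Matrix (Fin n3) (Fin n3) ℂ) (hS3 : S3 = T3 - diagonal (fun i => T3 i i))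
    (Y C : Fin n1 → Fin n2 → Fin n3 → ℂ)
    (hC : ∀ i j k, C i j k = (T1 i i + T2 j j + T3 k k)⁻¹)
    (K : ℕ → Fin n1 → Fin n2 → Fin n3 → ℂ)
    (hK0 : K 0 = hadT C (mode3 (mode2 (mode1 Y U1ᴴ) U2ᴴ) U3ᴴ))
    (hK : ∀ j : ℕ, K (j + 1) =
      hadT C (mode1 (K j) S1 + mode2 (K j) S2 + mode3 (K j) S3))
    (X : Fin n1 → Fin n2 → Fin n3 → ℂ)
    (hX : X = mode3 (mode2 (mode1
        (∑ j ∈ Finset.range (n1 * n2 * n3), ((-1 : ℂ) ^ j) • K j) U1) U2) U3) :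
    (ksum3 A3 A2 A1).mulVec (vecT X) = vecT Y := by
  classical
  set Q : Matrix (Fin n3 × Fin n2 × Fin n1) (Fin n3 × Fin n2 × Fin n1) ℂ :=
    U3 ⊗ₖ (U2 ⊗ₖ U1) with hQdef
  have hQQH : Q * Qᴴ = 1 := by
    rw [hQdef, myKronecker_conjTranspose, myKronecker_conjTranspose,
      ← Matrix.mul_kronecker_mul, ← Matrix.mul_kronecker_mul, hU1.1, hU2.1, hU3.1,
      Matrix.one_kronecker_one, Matrix.one_kronecker_one]
  -- A * U = U * T for each factor
  have hAU1 : A1 * U1 = U1 * T1 := by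
    rw [hA1, Matrix.mul_assoc, Matrix.mul_assoc, hU1.2, Matrix.mul_one]
  have hAU2 : A2 * U2 = U2 * T2 := by
    rw [hA2, Matrix.mul_assoc, Matrix.mul_assoc, hU2.2, Matrix.mul_one]
  have hAU3 : A3 * U3 = U3 * T3 := by
    rw [hA3, Matrix.mul_assoc, Matrix.mul_assoc, hU3.2, Matrix.mul_one]
  have hcomm : ksum3 A3 A2 A1 * Q = Q * ksum3 T3 T2 T1 := by
    simp only [ksum3, hQdef, Matrix.add_mul, Matrix.mul_add,
      ← Matrix.mul_kronecker_mul, Matrix.one_kronecker_one, hAU1, hAU2, hAU3,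
      Matrix.one_mul, Matrix.mul_one]
  -- diagonal data
  set d : Fin n3 × Fin n2 × Fin n1 → ℂ :=
    fun p => T1 p.2.2 p.2.2 + T2 p.2.1 p.2.1 + T3 p.1 p.1 with hd
  set c : Fin n3 × Fin n2 × Fin n1 → ℂ := fun p => (d p)⁻¹ with hcdef
  have hdc : ∀ p, d p * c p = 1 := fun p =>
    mul_inv_cancel₀ (hne p.2.2 p.2.1 p.1)
  set Dc : Matrix (Fin n3 × Fin n2 × Fin n1) (Fin n3 × Fin n2 × Fin n1) ℂ :=
    diagonal c with hDc
  have hDdDc : diagonal d * Dc = 1 := by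
    rw [hDc, Matrix.diagonal_mul_diagonal]
    rw [show (fun i => d i * c i) = fun _ => (1 : ℂ) from funext hdc]
    exact Matrix.diagonal_one
  set N : Matrix (Fin n3 × Fin n2 × Fin n1) (Fin n3 × Fin n2 × Fin n1) ℂ :=
    ksum3 S3 S2 S1 with hN
  have hMsplit : ksum3 T3 T2 T1 = diagonal d + N := by
    rw [hN, hS1, hS2, hS3, hd]
    exact myKsum3_split T1 T2 T3
  -- strict upper triangularity of N
  have hS1' : ∀ a b : Fin n1, ¬ a < b → S1 a b = 0 := by
    intro a b hab
    rcases lt_or_eq_of_le (le_of_not_gt hab) with h | h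
    · simp [hS1, Matrix.diagonal_apply, (Fin.ne_of_lt h).symm, hT1 a b h]
    · subst h; simp [hS1]
  have hS2' : ∀ a b : Fin n2, ¬ a < b → S2 a b = 0 := by
    intro a b hab
    rcases lt_or_eq_of_le (le_of_not_gt hab) with h | h
    · simp [hS2, Matrix.diagonal_apply, (Fin.ne_of_lt h).symm, hT2 a b h]
    · subst h; simp [hS2]
  have hS3' : ∀ a b : Fin n3, ¬ a < b → S3 a b = 0 := by
    intro a b hab
    rcases lt_or_eq_of_le (le_of_not_gt hab) with h | h
    · simp [hS3, Matrix.diagonal_apply, (Fin.ne_of_lt h).symm, hT3 a b h]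
    · subst h; simp [hS3]
  set f : Fin n3 × Fin n2 × Fin n1 → ℕ :=
    fun p => (p.1 : ℕ) * (n2 * n1) + (p.2.1 : ℕ) * n1 + (p.2.2 : ℕ) with hfdef
  have hNzero : ∀ p q, ¬ f p < f q → N p q = 0 := by
    rintro ⟨k, j, i⟩ ⟨k', j', i'⟩ h
    have hn1 : 0 < n1 := i.pos
    have hn2 : 0 < n2 := j.pos
    have hi : (i : ℕ) < n1 := i.isLt
    have hi' : (i' : ℕ) < n1 := i'.isLt
    have hj : (j : ℕ) < n2 := j.isLt
    have hj' : (j' : ℕ) < n2 := j'.isLt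
    simp only [hfdef, not_lt] at h
    simp only [hN, ksum3, Matrix.add_apply, kroneckerMap_apply, Matrix.one_apply,
      Prod.mk.injEq]
    have h3 : S3 k k' * (if (j, i) = (j', i') then (1:ℂ) else 0) = 0 := by
      by_cases hji : (j, i) = (j', i')
      · rw [Prod.mk.injEq] at hji
        obtain ⟨hj0, hi0⟩ := hji
        subst hj0; subst hi0
        rw [hS3' k k' ?_, zero_mul]
        intro hkk
        have : ((k : ℕ) + 1) * (n2 * n1) ≤ (k' : ℕ) * (n2 * n1) :=
          Nat.mul_le_mul_right _ (Nat.succ_le_of_lt hkk)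
        rw [Nat.succ_mul] at this
        have hpos : 0 < n2 * n1 := Nat.mul_pos hn2 hn1
        omega
      · rw [if_neg hji, mul_zero]
    have h2 : (if k = k' then (1:ℂ) else 0) * (S2 j j' * (if i = i' then (1:ℂ) else 0)) = 0 := by
      by_cases hkk : k = k'
      · by_cases hii : i = i'
        · rw [hS2' j j' ?_, zero_mul, mul_zero]
          intro hjj
          have : ((j : ℕ) + 1) * n1 ≤ (j' : ℕ) * n1 :=
            Nat.mul_le_mul_right _ (Nat.succ_le_of_lt hjj)
          rw [Nat.succ_mul] at this
          subst hkk; subst hii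
          omega
        · rw [if_neg hii, mul_zero, mul_zero]
      · rw [if_neg hkk, zero_mul]
    have h1 : (if k = k' then (1:ℂ) else 0) * ((if j = j' then (1:ℂ) else 0) * S1 i i') = 0 := by
      by_cases hkk : k = k'
      · by_cases hjj : j = j'
        · rw [hS1' i i' ?_, mul_zero, mul_zero]
          intro hii
          subst hkk; subst hjj
          omega
        · rw [if_neg hjj, zero_mul, mul_zero]
      · rw [if_neg hkk, zero_mul]
    simp only [Prod.mk.injEq] at h3 h2 h1
    rw [h3, h2, h1, add_zero, add_zero]
  have hPzero : ∀ p q, ¬ f p < f q → (N * Dc) p q = 0 := by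
    intro p q h
    rw [hDc, Matrix.mul_diagonal, hNzero p q h, zero_mul]
  have hfbound : ∀ q : Fin n3 × Fin n2 × Fin n1,
      f q < Fintype.card (Fin n3 × Fin n2 × Fin n1) := by
    rintro ⟨k, j, i⟩
    simp only [hfdef, Fintype.card_prod, Fintype.card_fin]
    have hi : (i : ℕ) < n1 := i.isLt
    have hj1 : ((j : ℕ) + 1) * n1 ≤ n2 * n1 := Nat.mul_le_mul_right _ (Nat.succ_le_of_lt j.isLt)
    have hk1 : ((k : ℕ) + 1) * (n2 * n1) ≤ n3 * (n2 * n1) :=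
      Nat.mul_le_mul_right _ (Nat.succ_le_of_lt k.isLt)
    rw [Nat.succ_mul] at hj1 hk1
    omega
  have hcard : Fintype.card (Fin n3 × Fin n2 × Fin n1) = n1 * n2 * n3 := by
    simp [Fintype.card_prod, Fintype.card_fin]; ring
  have hNil : (N * Dc) ^ (n1 * n2 * n3) = 0 := by
    rw [← hcard]
    exact myNilpotent_of_strict f hfbound (N * Dc) hPzero
  have htel := myTelescope (diagonal d) N Dc hDdDc (n1 * n2 * n3)
  rw [← hMsplit, hNil, smul_zero, sub_zero] at htel
  -- vecT of K
  have hvecK : ∀ m : ℕ, vecT (K m)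
      = ((Dc * N) ^ m * Dc).mulVec (vecT (mode3 (mode2 (mode1 Y U1ᴴ) U2ᴴ) U3ᴴ)) := by
    intro m
    induction m with
    | zero =>
      rw [hK0, myVecT_hadT]
      have : (fun p : Fin n3 × Fin n2 × Fin n1 => C p.2.2 p.2.1 p.1) = c := by
        funext p
        rw [hC, hcdef, hd]
      rw [this, ← hDc, pow_zero, Matrix.one_mul]
    | succ m ih =>
      rw [hK m, myVecT_hadT, myVecT_modes_sum, ih, ← hN]
      have : (fun p : Fin n3 × Fin n2 × Fin n1 => C p.2.2 p.2.1 p.1) = c := by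
        funext p
        rw [hC, hcdef, hd]
      rw [this, ← hDc, Matrix.mulVec_mulVec, Matrix.mulVec_mulVec, pow_succ',
        Matrix.mul_assoc, Matrix.mul_assoc, ← Matrix.mul_assoc]
  -- vecT of X via Q
  have hvecX : vecT X = Q.mulVec
      ((∑ j ∈ Finset.range (n1 * n2 * n3), ((-1 : ℂ) ^ j) • ((Dc * N) ^ j * Dc)).mulVec
        (vecT (mode3 (mode2 (mode1 Y U1ᴴ) U2ᴴ) U3ᴴ))) := by
    rw [hX, myVecT_mode123, ← hQdef, mySum_mulVec, myVecT_sum]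
    refine congrArg Q.mulVec ?_
    refine Finset.sum_congr rfl fun m _ => ?_
    rw [myVecT_smul, hvecK m, Matrix.smul_mulVec]
  have hvecYt : vecT (mode3 (mode2 (mode1 Y U1ᴴ) U2ᴴ) U3ᴴ) = Qᴴ.mulVec (vecT Y) := by
    rw [myVecT_mode123, hQdef, myKronecker_conjTranspose, myKronecker_conjTranspose]
  rw [hvecX, Matrix.mulVec_mulVec, Matrix.mulVec_mulVec, hcomm, Matrix.mul_assoc,
    htel, Matrix.mul_one, hvecYt, Matrix.mulVec_mulVec, hQQH, Matrix.one_mulVec]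
end
end

section
/- In the setting of the previous construction (Schur decompositions A⁽ᵐ⁾ = U⁽ᵐ⁾ T⁽ᵐ⁾ U⁽ᵐ⁾*, Λ⁽ᵐ⁾ = diag(T⁽ᵐ⁾), T̃⁽ᵐ⁾ = T⁽ᵐ⁾ − Λ⁽ᵐ⁾, sums of diagonal eigenvalues nonzero, C_{i,j,k} = 1/(λ⁽¹⁾_i + λ⁽²⁾_j + λ⁽³⁾_k), K_0 = C ⊙ (Y ×₁ U⁽¹⁾* ×₂ U⁽²⁾* ×₃ U⁽³⁾*), K_{j+1} = C ⊙ (K_j ×₁ T̃⁽¹⁾ + K_j ×₂ T̃⁽²⁾ + K_j ×₃ T̃⁽³⁾)), the recursion satisfies vec(K_{j+1}) = N^{j+1} vec(K_0) for all j ≥ 0, where N = (Λ⁽³⁾ ⊕ Λ⁽²⁾ ⊕ Λ⁽¹⁾)⁻¹ (T̃⁽³⁾ ⊕ T̃⁽²⁾ ⊕ T̃⁽¹⁾); consequently K_j = 0 for all j ≥ n1 n2 n3. -/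
open Matrix
open scoped Kronecker

noncomputable section

private lemma ksum3_aux_lt (a b i i' n : ℕ) (h : a < b) (hi : i < n) :
    a * n + i < b * n + i' :=
  calc a * n + i < a * n + n := by omega
    _ = (a + 1) * n := by ring
    _ ≤ b * n := Nat.mul_le_mul_right n h
    _ ≤ b * n + i' := Nat.le_add_right _ _


private lemma ksum3_mulVec {n1 n2 n3 : ℕ}
    (M1 : Matrix (Fin n1) (Fin n1) ℂ) (M2 : Matrix (Fin n2) (Fin n2) ℂ)
    (M3 : Matrix (Fin n3) (Fin n3) ℂ) (T : Fin n1 → Fin n2 → Fin n3 → ℂ)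
    (k : Fin n3) (j : Fin n2) (i : Fin n1) :
    (ksum3 M3 M2 M1).mulVec (vecT T) (k, j, i) =
      mode1 T M1 i j k + mode2 T M2 i j k + mode3 T M3 i j k := by
  have e3 : ((M3 ⊗ₖ (1 : Matrix (Fin n2 × Fin n1) (Fin n2 × Fin n1) ℂ)).mulVec
      (vecT T)) (k, j, i) = mode3 T M3 i j k := by
    simp [Matrix.mulVec, dotProduct, kroneckerMap_apply, Matrix.one_apply,
      Fintype.sum_prod_type, Prod.ext_iff, ite_and, mul_ite, ite_mul, mul_zero,
      zero_mul, mul_one, one_mul, Finset.sum_ite_eq, Finset.sum_ite_eq', vecT,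
      mode3, mul_comm]
  have e2 : (((1 : Matrix (Fin n3) (Fin n3) ℂ) ⊗ₖ
      (M2 ⊗ₖ (1 : Matrix (Fin n1) (Fin n1) ℂ))).mulVec (vecT T)) (k, j, i) =
      mode2 T M2 i j k := by
    simp [Matrix.mulVec, dotProduct, kroneckerMap_apply, Matrix.one_apply,
      Fintype.sum_prod_type, Prod.ext_iff, ite_and, mul_ite, ite_mul, mul_zero,
      zero_mul, mul_one, one_mul, Finset.sum_ite_eq, Finset.sum_ite_eq', vecT,
      mode2, mul_comm]
  have e1 : (((1 : Matrix (Fin n3) (Fin n3) ℂ) ⊗ₖ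
      ((1 : Matrix (Fin n2) (Fin n2) ℂ) ⊗ₖ M1)).mulVec (vecT T)) (k, j, i) =
      mode1 T M1 i j k := by
    simp [Matrix.mulVec, dotProduct, kroneckerMap_apply, Matrix.one_apply,
      Fintype.sum_prod_type, Prod.ext_iff, ite_and, mul_ite, ite_mul, mul_zero,
      zero_mul, mul_one, one_mul, Finset.sum_ite_eq, Finset.sum_ite_eq', vecT,
      mode1, mul_comm]
  simp only [ksum3, Matrix.add_mulVec, Pi.add_apply, e1, e2, e3]
  ring

private lemma diag_mulVec {n1 n2 n3 : ℕ} (d : Fin n3 × Fin n2 × Fin n1 → ℂ)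
    (v : Fin n3 × Fin n2 × Fin n1 → ℂ) (p : Fin n3 × Fin n2 × Fin n1) :
    (Matrix.diagonal d).mulVec v p = d p * v p := by
  simp [Matrix.mulVec, dotProduct, Matrix.diagonal_apply, ite_mul,
    zero_mul, Finset.sum_ite_eq]

/-- in the setting of the previous construction, the recursion
satisfies `vec(K_{j+1}) = N^{j+1} vec(K_0)` for all `j ≥ 0`, where
`N = (Λ⁽³⁾ ⊕ Λ⁽²⁾ ⊕ Λ⁽¹⁾)⁻¹ (T̃⁽³⁾ ⊕ T̃⁽²⁾ ⊕ T̃⁽¹⁾)`; consequently `K_j = 0`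
for all `j ≥ n1 n2 n3`. -/
theorem ksum3_K_recursion {n1 n2 n3 : ℕ}
    (A1 U1 T1 : Matrix (Fin n1) (Fin n1) ℂ)
    (A2 U2 T2 : Matrix (Fin n2) (Fin n2) ℂ)
    (A3 U3 T3 : Matrix (Fin n3) (Fin n3) ℂ)
    (hU1 : U1 * U1ᴴ = 1 ∧ U1ᴴ * U1 = 1)
    (hU2 : U2 * U2ᴴ = 1 ∧ U2ᴴ * U2 = 1)
    (hU3 : U3 * U3ᴴ = 1 ∧ U3ᴴ * U3 = 1)
    (hT1 : ∀ i j : Fin n1, j < i → T1 i j = 0)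
    (hT2 : ∀ i j : Fin n2, j < i → T2 i j = 0)
    (hT3 : ∀ i j : Fin n3, j < i → T3 i j = 0)
    (hA1 : A1 = U1 * T1 * U1ᴴ)
    (hA2 : A2 = U2 * T2 * U2ᴴ)
    (hA3 : A3 = U3 * T3 * U3ᴴ)
    (hne : ∀ (i : Fin n1) (j : Fin n2) (k : Fin n3), T1 i i + T2 j j + T3 k k ≠ 0)
    (L1 : Matrix (Fin n1) (Fin n1) ℂ) (hL1 : L1 = diagonal (fun i => T1 i i))
    (L2 : Matrix (Fin n2) (Fin n2) ℂ) (hL2 : L2 = diagonal (fun i => T2 i i))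
    (L3 : Matrix (Fin n3) (Fin n3) ℂ) (hL3 : L3 = diagonal (fun i => T3 i i))
    (S1 : Matrix (Fin n1) (Fin n1) ℂ) (hS1 : S1 = T1 - L1)
    (S2 : Matrix (Fin n2) (Fin n2) ℂ) (hS2 : S2 = T2 - L2)
    (S3 : Matrix (Fin n3) (Fin n3) ℂ) (hS3 : S3 = T3 - L3)
    (Y C : Fin n1 → Fin n2 → Fin n3 → ℂ)
    (hC : ∀ i j k, C i j k = (T1 i i + T2 j j + T3 k k)⁻¹)
    (K : ℕ → Fin n1 → Fin n2 → Fin n3 → ℂ)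
    (hK0 : K 0 = hadT C (mode3 (mode2 (mode1 Y U1ᴴ) U2ᴴ) U3ᴴ))
    (hK : ∀ j : ℕ, K (j + 1) =
      hadT C (mode1 (K j) S1 + mode2 (K j) S2 + mode3 (K j) S3))
    (N : Matrix (Fin n3 × Fin n2 × Fin n1) (Fin n3 × Fin n2 × Fin n1) ℂ)
    (hN : N = (ksum3 L3 L2 L1)⁻¹ * ksum3 S3 S2 S1) :
    (∀ j : ℕ, vecT (K (j + 1)) = (N ^ (j + 1)).mulVec (vecT (K 0))) ∧
      (∀ j : ℕ, n1 * n2 * n3 ≤ j → K j = 0) := by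
  -- abbreviations
  clear hU1 hU2 hU3 hA1 hA2 hA3 hK0
  set d : Fin n3 × Fin n2 × Fin n1 → ℂ :=
    fun p => T3 p.1 p.1 + T2 p.2.1 p.2.1 + T1 p.2.2 p.2.2 with hd
  have hdne : ∀ p, d p ≠ 0 := by
    intro p h
    exact hne p.2.2 p.2.1 p.1 (by rw [← h]; simp [hd]; ring)
  have hCd : ∀ (i : Fin n1) (j : Fin n2) (k : Fin n3), C i j k = (d (k, j, i))⁻¹ := by
    intro i j k
    rw [hC]
    congr 1
    simp [hd]; ring
  -- triangularity of the S matrices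
  have hS1z : ∀ a b : Fin n1, ¬ a < b → S1 a b = 0 := by
    intro a b h
    rcases eq_or_lt_of_le (not_lt.mp h) with h' | h'
    · simp [hS1, hL1, ← h']
    · simp [hS1, hL1, hT1 a b h', diagonal_apply_ne _ (ne_of_gt h')]
  have hS2z : ∀ a b : Fin n2, ¬ a < b → S2 a b = 0 := by
    intro a b h
    rcases eq_or_lt_of_le (not_lt.mp h) with h' | h'
    · simp [hS2, hL2, ← h']
    · simp [hS2, hL2, hT2 a b h', diagonal_apply_ne _ (ne_of_gt h')]
  have hS3z : ∀ a b : Fin n3, ¬ a < b → S3 a b = 0 := by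
    intro a b h
    rcases eq_or_lt_of_le (not_lt.mp h) with h' | h'
    · simp [hS3, hL3, ← h']
    · simp [hS3, hL3, hT3 a b h', diagonal_apply_ne _ (ne_of_gt h')]
  -- the Kronecker sum of the diagonals is diagonal
  have hD : ksum3 L3 L2 L1 = diagonal d := by
    rw [hL1, hL2, hL3]
    ext ⟨k, j, i⟩ ⟨k', j', i'⟩
    by_cases hkk : k = k' <;> by_cases hjj : j = j' <;> by_cases hii : i = i' <;>
      (try simp [ksum3, kroneckerMap_apply, one_apply, diagonal_apply, Prod.ext_iff,
        hkk, hjj, hii, hd]) <;> (try ring)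
  have hNd : N = diagonal (fun p => (d p)⁻¹) * ksum3 S3 S2 S1 := by
    rw [hN, hD]
    congr 1
    apply Matrix.inv_eq_right_inv
    rw [diagonal_mul_diagonal]
    have h1 : (fun i => d i * (d i)⁻¹) = fun _ => (1 : ℂ) :=
      funext fun p => mul_inv_cancel₀ (hdne p)
    rw [h1, diagonal_one]
  -- the key one-step identity
  have hstep : ∀ j : ℕ, vecT (K (j + 1)) = N.mulVec (vecT (K j)) := by
    intro j
    funext p
    obtain ⟨k, j2, i⟩ := p
    rw [hK j, hNd, ← Matrix.mulVec_mulVec]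
    show hadT C _ i j2 k = _
    simp only [hadT, Pi.add_apply]
    rw [hCd, diag_mulVec, ksum3_mulVec]
  -- part 1
  have part1 : ∀ j : ℕ, vecT (K (j + 1)) = (N ^ (j + 1)).mulVec (vecT (K 0)) := by
    intro j
    induction j with
    | zero => rw [hstep 0, pow_one]
    | succ m ih =>
        rw [hstep (m + 1), ih, Matrix.mulVec_mulVec, ← pow_succ']
  refine ⟨part1, ?_⟩
  -- nilpotency
  set f : Fin n3 × Fin n2 × Fin n1 → ℕ :=
    fun p => ((p.1 : ℕ) * n2 + (p.2.1 : ℕ)) * n1 + (p.2.2 : ℕ) with hf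
  have hfb : ∀ p, f p < n1 * n2 * n3 := by
    rintro ⟨k, j, i⟩
    have h1 : (k : ℕ) * n2 + (j : ℕ) < n3 * n2 :=
      calc (k : ℕ) * n2 + (j : ℕ) < (k : ℕ) * n2 + n2 := by omega
        _ = ((k : ℕ) + 1) * n2 := by ring
        _ ≤ n3 * n2 := Nat.mul_le_mul_right n2 k.isLt
    have h2 := ksum3_aux_lt _ _ (i : ℕ) 0 n1 h1 i.isLt
    have h3 : n3 * n2 * n1 = n1 * n2 * n3 := by ring
    show ((k : ℕ) * n2 + (j : ℕ)) * n1 + (i : ℕ) < n1 * n2 * n3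
    omega
  have hNz : ∀ p q, N p q ≠ 0 → f p < f q := by
    rintro ⟨k, j, i⟩ ⟨k', j', i'⟩ hpq
    rw [hNd, Matrix.diagonal_mul] at hpq
    have hM : ksum3 S3 S2 S1 (k, j, i) (k', j', i') ≠ 0 := by
      intro h; exact hpq (by rw [h, mul_zero])
    simp only [ksum3, Matrix.add_apply, kroneckerMap_apply, Matrix.one_apply] at hM
    by_cases hkk : k = k'
    · subst hkk
      simp only [hS3z k k (lt_irrefl k), zero_mul, zero_add, if_pos rfl, one_mul,
        eq_self_iff_true, if_true] at hM
      by_cases hjj : j = j'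
      · subst hjj
        simp only [hS2z j j (lt_irrefl j), zero_mul, zero_add, if_pos rfl, one_mul,
          mul_zero, eq_self_iff_true, if_true] at hM
        have hii : i < i' := by
          by_contra hc
          simp [hS1z i i' hc] at hM
        show ((k : ℕ) * n2 + (j : ℕ)) * n1 + (i : ℕ) <
          ((k : ℕ) * n2 + (j : ℕ)) * n1 + (i' : ℕ)
        omega
      · simp only [if_neg hjj, zero_mul, add_zero] at hM
        have hii : i = i' := by
          by_contra hc
          simp [Prod.ext_iff, if_neg hc] at hM
        subst hii
        have hjj' : j < j' := by
          by_contra hc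
          simp [hS2z j j' hc] at hM
        show ((k : ℕ) * n2 + (j : ℕ)) * n1 + (i : ℕ) <
          ((k : ℕ) * n2 + (j' : ℕ)) * n1 + (i : ℕ)
        exact ksum3_aux_lt _ _ _ _ n1 (by omega) i.isLt
    · simp only [if_neg hkk, zero_mul, mul_zero, add_zero] at hM
      have heq : j = j' ∧ i = i' := by
        by_contra hc
        apply hM
        have : ¬ ((j, i) = (j', i')) := by
          simp only [Prod.mk.injEq]; tauto
        rw [if_neg this, mul_zero]
      obtain ⟨rfl, rfl⟩ := heq
      have hkk' : k < k' := by
        by_contra hc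
        simp [hS3z k k' hc] at hM
      show ((k : ℕ) * n2 + (j : ℕ)) * n1 + (i : ℕ) <
        ((k' : ℕ) * n2 + (j : ℕ)) * n1 + (i : ℕ)
      exact ksum3_aux_lt _ _ _ _ n1
        (ksum3_aux_lt _ _ _ _ n2 hkk' j.isLt) i.isLt
  have hpow : ∀ (m : ℕ) p q, (N ^ m) p q ≠ 0 → f p + m ≤ f q := by
    intro m
    induction m with
    | zero =>
        intro p q h
        simp only [pow_zero] at h
        have : p = q := by
          by_contra hc
          exact h (Matrix.one_apply_ne hc)
        subst this
        omega
    | succ m ih =>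
        intro p q h
        rw [pow_succ'] at h
        rw [Matrix.mul_apply] at h
        obtain ⟨r, -, hr⟩ := Finset.exists_ne_zero_of_sum_ne_zero h
        have h1 : N p r ≠ 0 := fun hz => hr (by rw [hz, zero_mul])
        have h2 : (N ^ m) r q ≠ 0 := fun hz => hr (by rw [hz, mul_zero])
        have := hNz p r h1
        have := ih r q h2
        omega
  have hNpow : ∀ m : ℕ, n1 * n2 * n3 ≤ m → N ^ m = 0 := by
    intro m hm
    ext p q
    rw [Matrix.zero_apply]
    by_contra h
    have := hpow m p q h
    have := hfb q
    omega
  intro j hj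
  funext i j2 k
  have hpos : 0 < n1 * n2 * n3 :=
    Nat.mul_pos (Nat.mul_pos i.pos j2.pos) k.pos
  obtain ⟨m, rfl⟩ : ∃ m, j = m + 1 := ⟨j - 1, by omega⟩
  have := congrFun (part1 m) (k, j2, i)
  rw [hNpow (m + 1) (by omega)] at this
  simpa [vecT, Matrix.zero_mulVec] using this
end
end

section
/- Let A₁ be the N×N real tridiagonal matrix with 2 on the main diagonal and −1 on the off-diagonals, let U be the matrix with entries U_{m,i} = √(2/(N+1)) sin(m i π/(N+1)), and let λ_i = 4 sin²(i π/(2(N+1))). For any Y ∈ ℝ^{N×N}, the matrix X = U (C ⊙ (Uᵀ Y U)) Uᵀ with C_{i,j} = 1/(λ_i + λ_j) satisfies (A₁ ⊕ A₁) vec(X) = vec(Y); that is, X solves the 2D discrete Poisson system A₂ u = b with A₂ = A₁ ⊕ A₁, u = vec(X), b = vec(Y). -/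
open Matrix
open scoped Kronecker

noncomputable section

/-- The `N × N` second-difference matrix: `2` on the diagonal, `-1` on the
first super- and sub-diagonals. -/
def secondDiff (N : ℕ) : Matrix (Fin N) (Fin N) ℝ :=
  Matrix.of fun j k =>
    if (j : ℕ) = (k : ℕ) then (2 : ℝ)
    else if (j : ℕ) + 1 = (k : ℕ) ∨ (k : ℕ) + 1 = (j : ℕ) then -1 else 0

/-- The eigenvalues `λ_i = 4 sin²(i π / (2(N+1)))` of `secondDiff N` (here `i`
is 1-based, so `i = i₀ + 1` for `i₀ : Fin N`). -/
def lamSD (N : ℕ) (i : Fin N) : ℝ :=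
  4 * Real.sin ((((i : ℕ) : ℝ) + 1) * Real.pi / (2 * ((N : ℝ) + 1))) ^ 2

/-- The eigenvector `s_i` of `secondDiff N` with entries
`(s_i)_m = √(2/(N+1)) sin(m i π/(N+1))` (1-based `m`, `i`). -/
def dstVec (N : ℕ) (i : Fin N) : Fin N → ℝ :=
  fun m => Real.sqrt (2 / ((N : ℝ) + 1)) *
    Real.sin ((((m : ℕ) : ℝ) + 1) * (((i : ℕ) : ℝ) + 1) * Real.pi / ((N : ℝ) + 1))

/-- The matrix `U = [s₁ s₂ ⋯ s_N]`, i.e. `U_{m,i} = √(2/(N+1)) sin(m i π/(N+1))`. -/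
def dstU (N : ℕ) : Matrix (Fin N) (Fin N) ℝ :=
  Matrix.of fun m i => dstVec N i m

/-!
The columns of `U` are orthonormal eigenvectors of `A₁`: with `θ = iπ/(N+1)`, the sequence
`g k = sin (k θ)` vanishes at `k = 0` and `k = N + 1` and satisfies
`2 g k - g (k-1) - g (k+1) = 2 (1 - cos θ) g k = λ_i g k`, while orthonormality reduces, by
product-to-sum, to the telescoping sums `∑_{m ≤ N} cos (m k π/(N+1)) = (1 - cos (kπ))/2`
(valid for `2(N+1) ∤ k`).
On vectorizations, `A₁ ⊕ A₁` acts as `X ↦ A₁ X + X A₁ᵀ`, so the system is a Sylvester equation;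
in the eigenbasis it becomes `(λ_i + λ_j) Z_ij = (Uᵀ Y U)_ij`, which `Z = C ⊙ (Uᵀ Y U)` solves.
-/

open Real Finset

theorem ksum2_mulVec_vecM {R : Type*} [CommRing R] {n1 n2 : ℕ} (A : Matrix (Fin n2) (Fin n2) R)
    (B : Matrix (Fin n1) (Fin n1) R) (X : Matrix (Fin n1) (Fin n2) R) :
    ksum2 A B *ᵥ vecM X = vecM (B * X + X * Aᵀ) := by
  ext ⟨j, i⟩
  simp only [ksum2, mulVec, dotProduct, vecM, Fintype.sum_prod_type, Matrix.add_apply,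
    kroneckerMap_apply, one_apply, add_mul, sum_add_distrib, mul_apply, transpose_apply, mul_ite,
    ite_mul, mul_one, one_mul, mul_zero, zero_mul, sum_ite_eq, sum_ite_irrel, sum_const_zero,
    mem_univ, if_true]
  rw [add_comm]
  simp only [mul_comm]

theorem diagonal_mul_hadamard_add_hadamard_mul_diagonal {R : Type*} [CommRing R] {n : Type*}
    [Fintype n] [DecidableEq n] (d : n → R) {C : Matrix n n R} (hC : ∀ i j, C i j * (d i + d j) = 1)
    (M : Matrix n n R) : diagonal d * (C ⊙ M) + (C ⊙ M) * diagonal d = M := by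
  ext i j
  simp only [Matrix.add_apply, diagonal_mul, mul_diagonal, hadamard_apply]
  linear_combination M i j * hC i j

theorem mul_add_mul_transpose_eq_of_mul_eq_mul_diagonal {R : Type*} [CommRing R] {n : Type*}
    [Fintype n] [DecidableEq n] {A U : Matrix n n R} {d : n → R} (hAU : A * U = U * diagonal d)
    (hU : U * Uᵀ = 1) {C : Matrix n n R} (hC : ∀ i j, C i j * (d i + d j) = 1) (Y : Matrix n n R) :
    A * (U * (C ⊙ (Uᵀ * Y * U)) * Uᵀ) + U * (C ⊙ (Uᵀ * Y * U)) * Uᵀ * Aᵀ = Y := by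
  have hUA : Uᵀ * Aᵀ = diagonal d * Uᵀ := by
    rw [← transpose_mul, hAU, transpose_mul, diagonal_transpose]
  set H := C ⊙ (Uᵀ * Y * U)
  calc A * (U * H * Uᵀ) + U * H * Uᵀ * Aᵀ
      = U * (diagonal d * H + H * diagonal d) * Uᵀ := by
        simp only [← Matrix.mul_assoc, hAU]
        rw [Matrix.mul_assoc (U * H), hUA]
        simp only [Matrix.mul_add, Matrix.add_mul, Matrix.mul_assoc]
    _ = (U * Uᵀ) * Y * (U * Uᵀ) := by
        rw [diagonal_mul_hadamard_add_hadamard_mul_diagonal d hC]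
        simp only [Matrix.mul_assoc]
    _ = Y := by rw [hU, Matrix.one_mul, Matrix.mul_one]

theorem two_sin_half_mul_sum_range_cos (φ : ℝ) (n : ℕ) :
    2 * sin (φ / 2) * ∑ m ∈ range n, cos (m * φ) = sin (n * φ - φ / 2) + sin (φ / 2) := by
  induction n with
  | zero => simp
  | succ n ih =>
    have hsin_sub : sin ((n + 1 : ℕ) * φ - φ / 2) - sin (n * φ - φ / 2) =
        2 * sin (φ / 2) * cos (n * φ) := by
      rw [sin_sub_sin]; push_cast; ring_nf
    rw [sum_range_succ, mul_add, ih]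
    linarith

theorem sum_range_cos_mul_int_mul_pi_div (N : ℕ) (k : ℤ) (hk : ¬ (2 * (N + 1) : ℤ) ∣ k) :
    ∑ m ∈ range (N + 1), cos (m * (k * π / (N + 1))) = (1 - cos (k * π)) / 2 := by
  set φ := k * π / (N + 1) with hφ
  have hsin : sin (φ / 2) ≠ 0 := by
    rw [Ne, sin_eq_zero_iff]
    rintro ⟨n, hn⟩
    refine hk ⟨n, ?_⟩
    rw [hφ] at hn
    field_simp at hn
    exact_mod_cast (by linarith : (k : ℝ) = 2 * (N + 1) * n)
  have hend : sin ((N + 1 : ℕ) * φ - φ / 2) = - cos (k * π) * sin (φ / 2) := by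
    have : ((N + 1 : ℕ) : ℝ) * φ = k * π := by rw [hφ]; push_cast; field_simp
    rw [this, sin_sub, sin_int_mul_pi]; ring
  apply mul_left_cancel₀ (mul_ne_zero two_ne_zero hsin)
  rw [two_sin_half_mul_sum_range_cos, hend]
  ring

theorem sum_range_sin_mul_sin_pi_div (N a b : ℕ) (ha : 0 < a) (haN : a ≤ N) (hbN : b ≤ N) :
    ∑ m ∈ range (N + 1), sin (m * (a * π / (N + 1))) * sin (m * (b * π / (N + 1))) =
      if a = b then ((N : ℝ) + 1) / 2 else 0 := by
  have hprod : ∀ m : ℕ, sin (m * (a * π / (N + 1))) * sin (m * (b * π / (N + 1))) =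
      (cos (m * (((a - b : ℤ) : ℝ) * π / (N + 1))) -
        cos (m * (((a + b : ℤ) : ℝ) * π / (N + 1)))) / 2 := by
    intro m
    push_cast
    rw [show m * ((a - b) * π / (N + 1)) = m * (a * π / (N + 1)) - m * (b * π / (N + 1)) by ring,
      show m * ((a + b) * π / (N + 1)) = m * (a * π / (N + 1)) + m * (b * π / (N + 1)) by ring,
      cos_sub, cos_add]
    ring
  have hndvd : ∀ k : ℤ, k ≠ 0 → |k| < 2 * (N + 1) → ¬ (2 * (N + 1) : ℤ) ∣ k :=
    fun k hk hlt hdvd => hk (Int.eq_zero_of_abs_lt_dvd hdvd hlt)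
  have hsum_add := sum_range_cos_mul_int_mul_pi_div N (a + b)
    (hndvd _ (by omega) (by rw [abs_lt]; omega))
  rw [sum_congr rfl fun m _ => hprod m, ← sum_div, sum_sub_distrib, hsum_add]
  split_ifs with hab
  · subst hab
    have : cos (((a + a : ℤ) : ℝ) * π) = 1 := by
      rw [show ((a + a : ℤ) : ℝ) * π = (a : ℤ) * (2 * π) by push_cast; ring, cos_int_mul_two_pi]
    rw [this]; simp
  · rw [sum_range_cos_mul_int_mul_pi_div N (a - b) (hndvd _ (by omega) (by rw [abs_lt]; omega))]
    rw [show ((a + b : ℤ) : ℝ) * π = ((a - b : ℤ) : ℝ) * π + (b : ℤ) * (2 * π) by push_cast; ring,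
      cos_add_int_mul_two_pi]
    simp

theorem secondDiff_apply (N : ℕ) (m k : Fin N) :
    secondDiff N m k = (if (k : ℕ) = m then 2 else 0) + (if (k : ℕ) = m + 1 then -1 else 0)
      + (if (k : ℕ) + 1 = m then -1 else 0) := by
  simp only [secondDiff, of_apply]
  split_ifs <;> first | omega | norm_num

theorem secondDiff_mulVec_of_boundary (N : ℕ) (g : ℕ → ℝ) (h0 : g 0 = 0) (hN : g (N + 1) = 0)
    (m : Fin N) : (secondDiff N *ᵥ fun k => g (k + 1)) m = 2 * g (m + 1) - g m - g (m + 2) := by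
  simp only [mulVec, dotProduct, secondDiff_apply, add_mul, ite_mul, zero_mul, sum_add_distrib]
  rw [Fin.sum_univ_eq_sum_range (fun k => if k = (m : ℕ) then 2 * g (k + 1) else 0),
    Fin.sum_univ_eq_sum_range (fun k => if k = (m : ℕ) + 1 then -1 * g (k + 1) else 0),
    Fin.sum_univ_eq_sum_range (fun k => if k + 1 = (m : ℕ) then -1 * g (k + 1) else 0)]
  have hup : ∑ k ∈ range N, (if k = (m : ℕ) + 1 then -1 * g (k + 1) else 0) = - g (m + 2) := by
    have := sum_range_succ (fun k => if k = (m : ℕ) + 1 then -1 * g (k + 1) else 0) N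
    rw [sum_ite_eq', if_pos (by simp), hN, mul_zero, ite_self, add_zero] at this
    linarith
  have hdown : ∑ k ∈ range N, (if k + 1 = (m : ℕ) then -1 * g (k + 1) else 0) = - g m := by
    have := sum_range_succ' (fun k => if k = (m : ℕ) then -1 * g k else 0) N
    rw [sum_ite_eq', if_pos (by simp), h0, mul_zero, ite_self, add_zero] at this
    linarith
  rw [sum_ite_eq', if_pos (by simp), hup, hdown]
  ring

theorem dstU_apply (N : ℕ) (m i : Fin N) :
    dstU N m i = √(2 / (N + 1)) * sin (((m : ℕ) + 1 : ℕ) * (((i : ℕ) + 1 : ℕ) * π / (N + 1))) := by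
  simp only [dstU, dstVec, of_apply]
  push_cast
  ring_nf

theorem dstU_transpose_mul_self (N : ℕ) : (dstU N)ᵀ * dstU N = 1 := by
  have hsq : √(2 / (N + 1)) * √(2 / (N + 1)) = 2 / ((N : ℝ) + 1) := mul_self_sqrt (by positivity)
  have hshift (x y : ℝ) : ∑ m : Fin N, sin (((m : ℕ) + 1 : ℕ) * x) * sin (((m : ℕ) + 1 : ℕ) * y) =
      ∑ m ∈ range (N + 1), sin (m * x) * sin (m * y) := by
    rw [sum_range_succ', Fin.sum_univ_eq_sum_range
      (fun m : ℕ => sin (((m + 1 : ℕ) : ℝ) * x) * sin (((m + 1 : ℕ) : ℝ) * y))]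
    simp
  ext i j
  simp only [mul_apply, transpose_apply, dstU_apply, mul_mul_mul_comm _ (sin _), hsq, ← mul_sum,
    hshift]
  rw [sum_range_sin_mul_sin_pi_div N _ _ (by omega) (by omega) (by omega), one_apply]
  simp only [Nat.add_right_cancel_iff, Fin.val_inj]
  split_ifs
  · field_simp
  · rw [mul_zero]

theorem lamSD_eq (N : ℕ) (i : Fin N) :
    lamSD N i = 2 * (1 - cos (((i : ℕ) + 1 : ℕ) * π / (N + 1))) := by
  have h := cos_two_mul' ((((i : ℕ) : ℝ) + 1) * π / (2 * ((N : ℝ) + 1)))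
  rw [show 2 * ((((i : ℕ) : ℝ) + 1) * π / (2 * ((N : ℝ) + 1))) = ((i : ℕ) + 1 : ℕ) * π / (N + 1) by
    push_cast; field_simp] at h
  rw [lamSD, h]
  linarith [sin_sq_add_cos_sq ((((i : ℕ) : ℝ) + 1) * π / (2 * ((N : ℝ) + 1)))]

theorem lamSD_pos (N : ℕ) (i : Fin N) : 0 < lamSD N i := by
  have hi : ((i : ℕ) : ℝ) + 1 < 2 * ((N : ℝ) + 1) := by
    have : ((i : ℕ) : ℝ) < N := by exact_mod_cast i.isLt
    linarith
  have hlt : (((i : ℕ) : ℝ) + 1) * π / (2 * ((N : ℝ) + 1)) < π := by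
    rw [div_lt_iff₀ (by positivity)]
    nlinarith [pi_pos]
  have := sin_pos_of_pos_of_lt_pi (by positivity) hlt
  unfold lamSD
  positivity

theorem secondDiff_mul_dstU (N : ℕ) :
    secondDiff N * dstU N = dstU N * diagonal (lamSD N) := by
  ext m i
  rw [mul_diagonal, lamSD_eq]
  set θ : ℝ := (((i : ℕ) + 1 : ℕ) : ℝ) * π / (N + 1) with hθ
  set g : ℕ → ℝ := fun k => √(2 / (N + 1)) * sin (k * θ)
  have hcol : (fun k => dstU N k i) = fun k : Fin N => g (k + 1) :=
    funext fun k => dstU_apply N k i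
  have hN : g (N + 1) = 0 := by
    simp only [g]
    rw [show ((N + 1 : ℕ) : ℝ) * θ = (((i : ℕ) + 1 : ℕ) : ℤ) * π by rw [hθ]; push_cast; field_simp,
      sin_int_mul_pi, mul_zero]
  change (secondDiff N *ᵥ fun k => dstU N k i) m = _
  rw [hcol, secondDiff_mulVec_of_boundary N g (by simp [g]) hN, congrFun hcol m]
  have hprev : ((m : ℕ) : ℝ) * θ = (((m : ℕ) + 1 : ℕ) : ℝ) * θ - θ := by push_cast; ring
  have hnext : (((m : ℕ) + 2 : ℕ) : ℝ) * θ = (((m : ℕ) + 1 : ℕ) : ℝ) * θ + θ := by push_cast; ring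
  simp only [g]
  rw [hprev, hnext, sin_sub, sin_add]
  ring

/-- explicit solution of the 2D discrete Poisson system
`(A₁ ⊕ A₁) vec X = vec Y` via `X = U (C ⊙ (Uᵀ Y U)) Uᵀ` with
`C_{i,j} = 1/(λ_i + λ_j)`. -/
theorem poisson2D_solution (N : ℕ) (Y C X : Matrix (Fin N) (Fin N) ℝ)
    (hC : ∀ i j, C i j = 1 / (lamSD N i + lamSD N j))
    (hX : X = dstU N * Matrix.hadamard C ((dstU N)ᵀ * Y * dstU N) * (dstU N)ᵀ) :
    (ksum2 (secondDiff N) (secondDiff N)).mulVec (vecM X) = vecM Y := by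
  have hC' : ∀ i j, C i j * (lamSD N i + lamSD N j) = 1 := fun i j => by
    rw [hC, one_div_mul_cancel (add_pos (lamSD_pos N i) (lamSD_pos N j)).ne']
  have hU : dstU N * (dstU N)ᵀ = 1 := mul_eq_one_comm.mp (dstU_transpose_mul_self N)
  rw [ksum2_mulVec_vecM, hX,
    mul_add_mul_transpose_eq_of_mul_eq_mul_diagonal (secondDiff_mul_dstU N) hU hC' Y]
end
end
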